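/- With G_k, H_k as defined, H_k(λ,μ) = 2^{k-1}[U_{k-1}((-λ-μ)/4) + μ U_{k-2}((-λ-μ)/4)] for all k ≥ 1. -/

import Mathlib

/-- Shifted Chebyshev polynomials of the second kind: `chebUs k = U_{k-1}`,
so `chebUs 0 = U_{-1} = 0`, `chebUs 1 = U_0 = 1`. -/
noncomputable def chebUs : ℕ → ℂ → ℂ
  | 0, _ => 0
  | 1, _ => 1
  | (k + 2), x => 2 * x * chebUs (k + 1) x - chebUs k x

/-- The pair `(G_k, H_k)` defined by `G_1 = μ - λ`, `H_1 = 1`,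
`G_{k+1} = (-λ-μ)G_k - 4H_k`, `H_{k+1} = G_k`.  Index `0` is a dummy value. -/
noncomputable def GH (l m : ℂ) : ℕ → ℂ × ℂ
  | 0 => (0, 0)
  | 1 => (m - l, 1)
  | (k + 2) => ((-l - m) * (GH l m (k + 1)).1 - 4 * (GH l m (k + 1)).2,
      (GH l m (k + 1)).1)

/-! Both `G_k` and `H_{k+1}` equal `2^k (U_k(x) + μ U_{k-1}(x))` with `x = (-λ-μ)/4`: this sequence
satisfies the recurrence `a_{k+2} = 4x a_{k+1} - 4 a_k` of `G` (as `H_{k+1} = G_k`), inherited from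
the Chebyshev recurrence, and it matches `H_1 = 1` and `G_1 = μ - λ`. -/

lemma chebUs_add_two (k : ℕ) (x : ℂ) :
    chebUs (k + 2) x = 2 * x * chebUs (k + 1) x - chebUs k x := rfl

noncomputable def chebUsLinComb (x m : ℂ) (k : ℕ) : ℂ :=
  2 ^ k * (chebUs (k + 1) x + m * chebUs k x)

lemma chebUsLinComb_add_two (x m : ℂ) (k : ℕ) :
    chebUsLinComb x m (k + 2) = 4 * x * chebUsLinComb x m (k + 1) - 4 * chebUsLinComb x m k := by
  simp only [chebUsLinComb, chebUs_add_two (k + 1), chebUs_add_two k]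
  ring

lemma GH_succ_eq (l m : ℂ) (k : ℕ) :
    GH l m (k + 1) =
      (chebUsLinComb ((-l - m) / 4) m (k + 1), chebUsLinComb ((-l - m) / 4) m k) := by
  induction k with
  | zero =>
    simp only [GH, chebUsLinComb, chebUs]
    ext <;> ring
  | succ k ih =>
    rw [GH, ih, chebUsLinComb_add_two]
    ext <;> ring

theorem H_formula (l m : ℂ) (k : ℕ) (hk : 1 ≤ k) :
    (GH l m k).2 = 2 ^ (k - 1) * (chebUs k ((-l - m) / 4)
      + m * chebUs (k - 1) ((-l - m) / 4)) := by
  obtain ⟨n, rfl⟩ := Nat.exists_eq_add_of_le' hk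
  rw [GH_succ_eq, Nat.add_sub_cancel]
  rfl
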